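/- arXiv:2604.15274 — 2 statements merged into one kernel-verified Lean document; each statement's English description precedes it below -/
import Mathlib

section
/- For any mixed graph G without directed cycles, χ(G) ≤ 2·vc(G) + 1, where vc(G) is the vertex cover number of the underlying undirected graph. Moreover this bound is tight: the directed path of length 2ℓ has chromatic number 2ℓ+1 and vertex cover number ℓ. -/
structure MixedGraph (V : Type) where
  Edge : V → V → Prop
  Arc : V → V → Prop
  edge_symm : ∀ u v, Edge u v → Edge v u
  edge_irrefl : ∀ v, ¬ Edge v v
  arc_irrefl : ∀ v, ¬ Arc v v
  not_edge_arc : ∀ u v, Arc u v → ¬ Edge u v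

namespace MixedGraph

variable {V : Type}

/-- No directed cycles: the arc relation has no nontrivial closed walks. -/
def Acyclic (G : MixedGraph V) : Prop := ∀ v, ¬ Relation.TransGen G.Arc v v

def Nminus (G : MixedGraph V) (v : V) : Set V := {u | G.Arc u v}
def Nplus (G : MixedGraph V) (v : V) : Set V := {u | G.Arc v u}
def Nu (G : MixedGraph V) (v : V) : Set V := {u | G.Edge u v}

/-- Two vertices have the same mixed neighborhood type. -/
def SameType (G : MixedGraph V) (u v : V) : Prop :=
  G.Nminus u = G.Nminus v ∧ G.Nplus u = G.Nplus v ∧ G.Nu u \ {v} = G.Nu v \ {u}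

/-- Mixed neighborhood diversity: the number of mixed types. -/
noncomputable def ndm (G : MixedGraph V) : ℕ := Nat.card (Quot G.SameType)

/-- The underlying undirected graph: arcs become edges. -/
def underlying (G : MixedGraph V) : SimpleGraph V where
  Adj u v := G.Edge u v ∨ G.Arc u v ∨ G.Arc v u
  symm := by
    refine ⟨?_⟩
    intro u v h
    rcases h with h | h | h
    · exact Or.inl (G.edge_symm u v h)
    · exact Or.inr (Or.inr h)
    · exact Or.inr (Or.inl h)
  loopless := by
    refine ⟨?_⟩
    intro v h
    rcases h with h | h | h
    · exact G.edge_irrefl v h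
    · exact G.arc_irrefl v h
    · exact G.arc_irrefl v h

/-- Same type in the underlying undirected graph. -/
def USameType (G : MixedGraph V) (u v : V) : Prop :=
  G.underlying.neighborSet u \ {v} = G.underlying.neighborSet v \ {u}

/-- Neighborhood diversity of the underlying undirected graph. -/
noncomputable def ndu (G : MixedGraph V) : ℕ := Nat.card (Quot G.USameType)

/-- A proper coloring: distinct colors across edges, increasing along arcs. -/
def ProperColoring (G : MixedGraph V) (c : V → ℕ) : Prop :=
  (∀ u v, G.Edge u v → c u ≠ c v) ∧ (∀ u v, G.Arc u v → c u < c v)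

/-- Chromatic number: least `k` admitting a proper coloring with colors `0,…,k-1`. -/
noncomputable def chi (G : MixedGraph V) : ℕ :=
  sInf {k | ∃ c : V → ℕ, G.ProperColoring c ∧ ∀ v, c v < k}

/-- Maxrank: the length of a longest directed path. -/
noncomputable def Lambda (G : MixedGraph V) : ℕ :=
  sSup {ℓ | ∃ p : ℕ → V, ∀ i < ℓ, G.Arc (p i) (p (i + 1))}

/-- Inrank of a vertex: the length of a longest directed path ending in it. -/
noncomputable def inrank (G : MixedGraph V) (v : V) : ℕ :=
  sSup {ℓ | ∃ p : ℕ → V, p ℓ = v ∧ ∀ i < ℓ, G.Arc (p i) (p (i + 1))}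

/-- A vertex cover of the underlying undirected graph (covers edges and arcs). -/
def IsVertexCover (G : MixedGraph V) (C : Finset V) : Prop :=
  ∀ u v, G.Edge u v ∨ G.Arc u v → u ∈ C ∨ v ∈ C

/-- Vertex cover number. -/
noncomputable def vc (G : MixedGraph V) : ℕ :=
  sInf {n | ∃ C : Finset V, C.card = n ∧ G.IsVertexCover C}

/-- Transitive closure of a mixed graph without directed cycles: all transitive
arcs are added, and edges parallel to arcs are removed. -/
def tc (G : MixedGraph V) (hG : G.Acyclic) : MixedGraph V where
  Edge u v := G.Edge u v ∧ ¬ Relation.TransGen G.Arc u v ∧ ¬ Relation.TransGen G.Arc v u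
  Arc u v := Relation.TransGen G.Arc u v
  edge_symm := fun u v h => ⟨G.edge_symm u v h.1, h.2.2, h.2.1⟩
  edge_irrefl := fun v h => G.edge_irrefl v h.1
  arc_irrefl := hG
  not_edge_arc := fun u v h hE => hE.2.1 h

/-- Induced mixed subgraph. -/
def induce (G : MixedGraph V) (S : Set V) : MixedGraph S where
  Edge u v := G.Edge u.1 v.1
  Arc u v := G.Arc u.1 v.1
  edge_symm := fun u v h => G.edge_symm u.1 v.1 h
  edge_irrefl := fun v => G.edge_irrefl v.1
  arc_irrefl := fun v => G.arc_irrefl v.1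
  not_edge_arc := fun u v => G.not_edge_arc u.1 v.1

/-- `I` is an independent set of the subgraph induced by `S`. -/
def IndepIn (G : MixedGraph V) (S I : Set V) : Prop :=
  I ⊆ S ∧ ∀ u ∈ I, ∀ v ∈ I, ¬ G.Edge u v ∧ ¬ G.Arc u v

/-- `I` is a maximal independent set of the subgraph induced by `S`. -/
def MaximalIndepIn (G : MixedGraph V) (S I : Set V) : Prop :=
  G.IndepIn S I ∧ ∀ J, G.IndepIn S J → I ⊆ J → J = I

/-- Clique number of the underlying undirected graph. -/
noncomputable def cliqueNum (G : MixedGraph V) : ℕ :=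
  sSup {n | ∃ s : Finset V, G.underlying.IsNClique n s}

end MixedGraph

/-!
Upper bound: fix a minimum vertex cover `C` with `k` vertices and a linear order of the vertices
in which every arc points upwards (it exists because arcs are acyclic). Walking along this order,
give the `i`-th vertex of `C` the colour `2i - 1` and every vertex outside `C` lying between the
`i`-th and `(i+1)`-th vertex of `C` the colour `2i`. The colours weakly increase along the order,
and strictly across every vertex of `C`; since every edge and arc has an endpoint in `C`, the
colouring is proper, and it uses the `2k + 1` colours `0, …, 2k`.

Tightness: along a directed path the colours strictly increase, and a directed path on `2ℓ + 1`
vertices contains `ℓ` disjoint arcs, each of which needs its own vertex in a cover.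
-/

namespace MixedGraph

open Finset Function

variable {V : Type} {G : MixedGraph V}

theorem chi_le_of_properColoring {c : V → ℕ} {k : ℕ} (hc : G.ProperColoring c)
    (hk : ∀ v, c v < k) : G.chi ≤ k :=
  Nat.sInf_le ⟨c, hc, hk⟩

theorem vc_le_card {C : Finset V} (hC : G.IsVertexCover C) : G.vc ≤ #C :=
  Nat.sInf_le ⟨C, rfl, hC⟩

theorem exists_isVertexCover_card_eq_vc [Fintype V] (G : MixedGraph V) :
    ∃ C : Finset V, G.IsVertexCover C ∧ #C = G.vc := by
  obtain ⟨C, hcard, hC⟩ :=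
    Nat.sInf_mem (s := {n | ∃ C : Finset V, #C = n ∧ G.IsVertexCover C})
      ⟨_, univ, rfl, fun u _ _ => Or.inl (mem_univ u)⟩
  exact ⟨C, hC, hcard⟩

/-- `Injective (Sum.elim a b)` says that the edges and arcs `a i b i` are pairwise disjoint. -/
theorem card_le_card_of_isVertexCover {ι : Type} [Fintype ι] {a b : ι → V}
    (hab : ∀ i, G.Edge (a i) (b i) ∨ G.Arc (a i) (b i)) (hinj : Injective (Sum.elim a b))
    {D : Finset V} (hD : G.IsVertexCover D) : Fintype.card ι ≤ #D := by
  classical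
  let pick : ι → ι ⊕ ι := fun i => if a i ∈ D then .inl i else .inr i
  have hpick : ∀ i, Sum.elim a b (pick i) ∈ D := fun i => by
    by_cases h : a i ∈ D
    · simp [pick, h]
    · simpa [pick, h] using (hD _ _ (hab i)).resolve_left h
  have hpick_inj : Injective pick := fun i j h => by
    simp only [pick] at h
    split_ifs at h <;> simpa using h
  rw [← card_univ]
  exact card_le_card_of_injOn _ (fun i _ => hpick i) (hinj.comp hpick_inj).injOn

theorem card_le_vc [Fintype V] {ι : Type} [Fintype ι] {a b : ι → V}
    (hab : ∀ i, G.Edge (a i) (b i) ∨ G.Arc (a i) (b i)) (hinj : Injective (Sum.elim a b)) :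
    Fintype.card ι ≤ G.vc := by
  obtain ⟨D, hD, hcard⟩ := G.exists_isVertexCover_card_eq_vc
  exact hcard ▸ card_le_card_of_isVertexCover hab hinj hD

theorem Acyclic.exists_injective_arc_lt [Fintype V] (hG : G.Acyclic) :
    ∃ key : V → ℕ ×ₗ ℕ, Injective key ∧ ∀ u v, G.Arc u v → key u < key v := by
  let depth : V → ℕ := fun v => {w | Relation.TransGen G.Arc w v}.ncard
  have hdepth : ∀ u v, G.Arc u v → depth u < depth v := fun u v huv =>
    Set.ncard_lt_ncard <| Set.ssubset_iff_subset_ne.2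
      ⟨fun _ hw => hw.tail huv, fun h =>
        hG u (show u ∈ {w | Relation.TransGen G.Arc w u} from h ▸ .single huv)⟩
  refine ⟨fun v => toLex (depth v, (Fintype.equivFin V v : ℕ)), fun u v h => ?_,
    fun u v huv => Prod.Lex.toLex_lt_toLex.2 (Or.inl (hdepth u v huv))⟩
  exact (Fintype.equivFin V).injective (Fin.ext (congrArg (fun p => (ofLex p).2) h))

section CoverColoring

variable [DecidableEq V] {α : Type} [LinearOrder α] (C : Finset V) (key : V → α)

def coverColoring (v : V) : ℕ :=
  2 * #{u ∈ C | key u < key v} + if v ∈ C then 1 else 0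

variable {C key}

theorem coverColoring_lt_coverColoring {u v : V} (h : key u < key v) (huv : u ∈ C ∨ v ∈ C) :
    coverColoring C key u < coverColoring C key v := by
  have hsub : {w ∈ C | key w < key u} ⊆ {w ∈ C | key w < key v} :=
    monotone_filter_right _ fun _ _ hw => hw.trans h
  unfold coverColoring
  by_cases hu : u ∈ C
  · have := card_lt_card <|
      (ssubset_iff_of_subset hsub).2 ⟨u, mem_filter.2 ⟨hu, h⟩, by simp⟩
    split_ifs <;> omega
  · have := card_le_card hsub
    simp only [hu, huv.resolve_left hu, if_true, if_false]
    omega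

theorem coverColoring_lt (v : V) : coverColoring C key v < 2 * #C + 1 := by
  have hle : #{u ∈ C | key u < key v} ≤ #C := card_filter_le _ _
  unfold coverColoring
  split_ifs with hv
  · have : #{u ∈ C | key u < key v} < #C :=
      card_lt_card (filter_ssubset.2 ⟨v, hv, lt_irrefl _⟩)
    omega
  · omega

theorem properColoring_coverColoring (hC : G.IsVertexCover C) (hkey : Injective key)
    (harc : ∀ u v, G.Arc u v → key u < key v) : G.ProperColoring (coverColoring C key) := by
  refine ⟨fun u v huv => ?_, fun u v huv =>
    coverColoring_lt_coverColoring (harc u v huv) (hC u v (Or.inr huv))⟩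
  have hcov := hC u v (Or.inl huv)
  have hne : u ≠ v := by rintro rfl; exact G.edge_irrefl u huv
  rcases lt_or_gt_of_ne (hkey.ne hne) with h | h
  · exact (coverColoring_lt_coverColoring h hcov).ne
  · exact (coverColoring_lt_coverColoring h hcov.symm).ne'

end CoverColoring

theorem Acyclic.chi_le_two_mul_vc_add_one [Fintype V] (hG : G.Acyclic) :
    G.chi ≤ 2 * G.vc + 1 := by
  classical
  obtain ⟨C, hC, hcard⟩ := G.exists_isVertexCover_card_eq_vc
  obtain ⟨key, hkey, harc⟩ := hG.exists_injective_arc_lt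
  rw [← hcard]
  exact chi_le_of_properColoring (properColoring_coverColoring hC hkey harc) coverColoring_lt

def dirPath (n : ℕ) : MixedGraph (Fin n) where
  Edge _ _ := False
  Arc u v := (v : ℕ) = u + 1
  edge_symm _ _ h := h
  edge_irrefl _ h := h
  arc_irrefl _ h := by omega
  not_edge_arc _ _ _ h := h

theorem dirPath_acyclic (n : ℕ) : (dirPath n).Acyclic := by
  have hlt : ∀ u v, Relation.TransGen (dirPath n).Arc u v → (u : ℕ) < v := by
    intro u v huv
    induction huv with
    | single h => simp only [dirPath] at h; omega
    | tail _ h ih => simp only [dirPath] at h; omega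
  exact fun v h => lt_irrefl _ (hlt v v h)

theorem ProperColoring.val_le_dirPath {n : ℕ} {c : Fin n → ℕ}
    (hc : (dirPath n).ProperColoring c) (v : Fin n) : (v : ℕ) ≤ c v := by
  obtain ⟨i, hi⟩ := v
  induction i with
  | zero => exact Nat.zero_le _
  | succ i ih => exact (ih (by omega)).trans_lt (hc.2 ⟨i, by omega⟩ ⟨i + 1, hi⟩ rfl)

theorem chi_dirPath (n : ℕ) : (dirPath n).chi = n := by
  have hval : (dirPath n).ProperColoring (fun v => v) := ⟨fun _ _ h => h.elim,
    fun u v (h : (v : ℕ) = u + 1) => show (u : ℕ) < v by omega⟩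
  refine le_antisymm (chi_le_of_properColoring hval Fin.isLt)
    (le_csInf ⟨n, _, hval, Fin.isLt⟩ ?_)
  rintro k ⟨c, hc, hk⟩
  cases n with
  | zero => exact Nat.zero_le _
  | succ m => exact (hc.val_le_dirPath (Fin.last m)).trans_lt (hk _)

theorem vc_dirPath (n : ℕ) : (dirPath n).vc = n / 2 := by
  let even : Fin (n / 2) → Fin n := fun i => ⟨2 * i, by omega⟩
  let odd : Fin (n / 2) → Fin n := fun i => ⟨2 * i + 1, by omega⟩
  have hodd : Injective odd := fun i j h => Fin.ext (by simpa [odd] using congrArg Fin.val h)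
  have hcover : (dirPath n).IsVertexCover (univ.map ⟨odd, hodd⟩) := by
    rintro u v (h | h)
    · exact h.elim
    simp only [dirPath] at h
    simp only [mem_map, mem_univ, true_and, Embedding.coeFn_mk]
    rcases Nat.even_or_odd' (u : ℕ) with ⟨i, hi | hi⟩
    · exact .inr ⟨⟨i, by omega⟩, Fin.ext (by simp [odd]; omega)⟩
    · exact .inl ⟨⟨i, by omega⟩, Fin.ext (by simp [odd]; omega)⟩
  refine le_antisymm ((vc_le_card hcover).trans_eq (by simp)) ?_
  have hinj : Injective (Sum.elim even odd) :=
    Injective.sumElim (f := even) (fun i j h => Fin.ext (by simpa [even] using congrArg Fin.val h))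
      hodd fun i j h => by simp [even, odd, Fin.ext_iff] at h; omega
  simpa using card_le_vc (G := dirPath n) (a := even) (b := odd) (fun i => .inr rfl) hinj

end MixedGraph

theorem stmt10 :
    (∀ (V : Type) [Fintype V], ∀ G : MixedGraph V, G.Acyclic → G.chi ≤ 2 * G.vc + 1) ∧
    ∀ ℓ : ℕ, ∃ P : MixedGraph (Fin (2 * ℓ + 1)),
      (P.Edge = fun _ _ => False) ∧
      (P.Arc = fun (u v : Fin (2 * ℓ + 1)) => (v : ℕ) = (u : ℕ) + 1) ∧
      P.Acyclic ∧ P.chi = 2 * ℓ + 1 ∧ P.vc = ℓ :=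
  ⟨fun _ _ _ hG => hG.chi_le_two_mul_vc_add_one, fun ℓ =>
    ⟨MixedGraph.dirPath _, rfl, rfl, MixedGraph.dirPath_acyclic _, MixedGraph.chi_dirPath _, by
      rw [MixedGraph.vc_dirPath]; omega⟩⟩
end

section
/- For every non-empty mixed graph G without directed cycles, there exists an optimal proper coloring of G in which the first color class (the set of vertices colored 1) is a maximal independent set of the subgraph induced by the vertices of inrank 0. Consequently, χ(G) = 1 + min over maximal independent sets I of G[V_0] of χ(G − I), where V_0 is the set of vertices of inrank 0. -/
-- ===== auxiliary lemmas =====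
section Aux
variable {V : Type} [Fintype V]

lemma aux_chain (G : MixedGraph V) {p : ℕ → V} {ℓ : ℕ}
    (h : ∀ i < ℓ, G.Arc (p i) (p (i + 1))) :
    ∀ i j, i < j → j ≤ ℓ → Relation.TransGen G.Arc (p i) (p j) := by
  intro i j hij hjl
  induction j with
  | zero => omega
  | succ j ih =>
    rcases Nat.lt_succ_iff_lt_or_eq.mp hij with h' | h'
    · exact (ih h' (by omega)).tail (h j (by omega))
    · subst h'; exact .single (h i (by omega))

lemma aux_len_lt (G : MixedGraph V) (hG : G.Acyclic) {p : ℕ → V} {ℓ : ℕ}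
    (h : ∀ i < ℓ, G.Arc (p i) (p (i + 1))) : ℓ < Fintype.card V := by
  have hinj : Function.Injective (fun k : Fin (ℓ + 1) => p k) := by
    intro a b hab
    by_contra hne
    rcases lt_or_gt_of_ne (fun hv : (a:ℕ) = b => hne (Fin.ext hv)) with hlt | hlt
    · exact hG (p a) (by simpa [hab] using aux_chain G h a b hlt (by omega))
    · exact hG (p b) (by simpa [hab] using aux_chain G h b a hlt (by omega))
  have := Fintype.card_le_of_injective _ hinj
  simpa using this

lemma aux_inrank_bdd (G : MixedGraph V) (hG : G.Acyclic) (v : V) :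
    BddAbove {ℓ | ∃ p : ℕ → V, p ℓ = v ∧ ∀ i < ℓ, G.Arc (p i) (p (i + 1))} :=
  ⟨Fintype.card V, fun ℓ ⟨_, _, hp⟩ => (aux_len_lt G hG hp).le⟩

lemma aux_inrank_mem (G : MixedGraph V) (hG : G.Acyclic) (v : V) :
    ∃ p : ℕ → V, p (G.inrank v) = v ∧ ∀ i < G.inrank v, G.Arc (p i) (p (i + 1)) := by
  have hne : ({ℓ | ∃ p : ℕ → V, p ℓ = v ∧ ∀ i < ℓ, G.Arc (p i) (p (i + 1))}).Nonempty :=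
    ⟨0, fun _ => v, rfl, by omega⟩
  exact Nat.sSup_mem hne (aux_inrank_bdd G hG v)

lemma aux_arc_inrank (G : MixedGraph V) (hG : G.Acyclic) {u v : V} (h : G.Arc u v) :
    G.inrank u < G.inrank v := by
  obtain ⟨p, hpl, hp⟩ := aux_inrank_mem G hG u
  have hmem : G.inrank u + 1 ∈ {ℓ | ∃ p : ℕ → V, p ℓ = v ∧ ∀ i < ℓ, G.Arc (p i) (p (i + 1))} := by
    refine ⟨fun i => if i ≤ G.inrank u then p i else v, by simp, ?_⟩
    intro i hi
    rcases Nat.lt_succ_iff_lt_or_eq.mp hi with h' | h'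
    · simpa [Nat.le_of_lt h', Nat.succ_le_of_lt h'] using hp i h'
    · subst h'; simpa [hpl] using h
  exact lt_of_lt_of_le (Nat.lt_succ_self _) (le_csSup (aux_inrank_bdd G hG v) hmem)

lemma aux_inrank_zero_iff (G : MixedGraph V) (hG : G.Acyclic) (v : V) :
    G.inrank v = 0 ↔ ∀ u, ¬ G.Arc u v := by
  constructor
  · intro h u harc
    have := aux_arc_inrank G hG harc
    omega
  · intro h
    by_contra hne
    obtain ⟨p, hpl, hp⟩ := aux_inrank_mem G hG v
    have : G.Arc (p (G.inrank v - 1)) (p (G.inrank v - 1 + 1)) := hp _ (by omega)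
    rw [show G.inrank v - 1 + 1 = G.inrank v by omega, hpl] at this
    exact h _ this

lemma aux_exists_coloring (G : MixedGraph V) (hG : G.Acyclic) :
    ∃ c : V → ℕ, G.ProperColoring c ∧ ∀ v, c v < Fintype.card V * Fintype.card V := by
  classical
  set n := Fintype.card V with hn
  set e := Fintype.equivFin V with he
  have hrank : ∀ v, G.inrank v < n := by
    intro v
    obtain ⟨p, hpl, hp⟩ := aux_inrank_mem G hG v
    exact aux_len_lt G hG hp
  refine ⟨fun v => G.inrank v * n + (e v).val, ⟨?_, ?_⟩, ?_⟩
  · intro u v huv heq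
    have heq' : G.inrank u * n + (e u).val = G.inrank v * n + (e v).val := heq
    have h1 : (G.inrank u * n + (e u).val) % n = (e u).val := by
      rw [Nat.mul_comm, Nat.mul_add_mod, Nat.mod_eq_of_lt (e u).isLt]
    have h2 : (G.inrank v * n + (e v).val) % n = (e v).val := by
      rw [Nat.mul_comm, Nat.mul_add_mod, Nat.mod_eq_of_lt (e v).isLt]
    have : (e u) = (e v) := Fin.ext (by rw [← h1, ← h2, heq'])
    have : u = v := e.injective this
    exact G.edge_irrefl v (this ▸ huv)
  · intro u v huv
    have hr := aux_arc_inrank G hG huv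
    have h1 : (e u).val < n := (e u).isLt
    calc G.inrank u * n + (e u).val < (G.inrank u + 1) * n := by
          rw [Nat.succ_mul]; omega
      _ ≤ G.inrank v * n := Nat.mul_le_mul_right n hr
      _ ≤ G.inrank v * n + (e v).val := Nat.le_add_right _ _
  · intro v
    have h1 : (e v).val < n := (e v).isLt
    have h2 := hrank v
    calc G.inrank v * n + (e v).val < (G.inrank v + 1) * n := by rw [Nat.succ_mul]; omega
      _ ≤ n * n := Nat.mul_le_mul_right n (by omega)

lemma aux_chi_mem (G : MixedGraph V) (hG : G.Acyclic) :
    ∃ c : V → ℕ, G.ProperColoring c ∧ ∀ v, c v < G.chi := by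
  have hne : {k | ∃ c : V → ℕ, G.ProperColoring c ∧ ∀ v, c v < k}.Nonempty := by
    obtain ⟨c, hc, hb⟩ := aux_exists_coloring G hG
    exact ⟨Fintype.card V * Fintype.card V, c, hc, hb⟩
  exact Nat.sInf_mem hne

lemma aux_chi_le (G : MixedGraph V) {k : ℕ} {c : V → ℕ}
    (hc : G.ProperColoring c) (hb : ∀ v, c v < k) : G.chi ≤ k :=
  Nat.sInf_le ⟨c, hc, hb⟩

lemma aux_chi_mem_induce (G : MixedGraph V) (hG : G.Acyclic) (S : Set V) :
    ∃ d : S → ℕ, (G.induce S).ProperColoring d ∧ ∀ x, d x < (G.induce S).chi := by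
  obtain ⟨c, hc, hb⟩ := aux_exists_coloring G hG
  have hne : {k | ∃ d : S → ℕ, (G.induce S).ProperColoring d ∧ ∀ x, d x < k}.Nonempty := by
    refine ⟨Fintype.card V * Fintype.card V, fun x => c x.1,
      ⟨fun u v h => hc.1 u.1 v.1 h, fun u v h => hc.2 u.1 v.1 h⟩, fun x => hb x.1⟩
  exact Nat.sInf_mem hne

lemma aux_extend (G : MixedGraph V) (S I₀ : Set V) (h₀ : G.IndepIn S I₀) :
    ∃ I, G.MaximalIndepIn S I ∧ I₀ ⊆ I := by
  have hfin : ({J | G.IndepIn S J ∧ I₀ ⊆ J}).Finite := Set.toFinite _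
  obtain ⟨I, ⟨hIind, hI0⟩, hmax⟩ :=
    Set.Finite.exists_maximalFor Set.ncard _ hfin ⟨I₀, h₀, subset_rfl⟩
  refine ⟨I, ⟨hIind, ?_⟩, hI0⟩
  intro J hJ hIJ
  have hJmem : J ∈ {J | G.IndepIn S J ∧ I₀ ⊆ J} := ⟨hJ, hI0.trans hIJ⟩
  have hle : I.ncard ≤ J.ncard := Set.ncard_le_ncard hIJ (Set.toFinite _)
  have heq := hmax hJmem hle
  exact (Set.eq_of_subset_of_ncard_le hIJ heq (Set.toFinite _)).symm

end Aux

theorem stmt12 {V : Type} [Fintype V] [Nonempty V] (G : MixedGraph V) (hG : G.Acyclic) :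
    (∃ c : V → ℕ, G.ProperColoring c ∧ (∀ v, c v < G.chi) ∧
      G.MaximalIndepIn {v | G.inrank v = 0} {v | c v = 0}) ∧
    G.chi = 1 + sInf {m | ∃ I : Set V,
      G.MaximalIndepIn {v | G.inrank v = 0} I ∧ m = (G.induce Iᶜ).chi} := by
  classical
  obtain ⟨c, hc, hclt⟩ := aux_chi_mem G hG
  have hchi_pos : 0 < G.chi := lt_of_le_of_lt (Nat.zero_le _) (hclt (Classical.arbitrary V))
  set V0 : Set V := {v | G.inrank v = 0} with hV0
  -- the color-0 class is independent in V0
  have hI0 : G.IndepIn V0 {v | c v = 0} := by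
    constructor
    · intro v hv
      simp only [Set.mem_setOf_eq] at hv
      show G.inrank v = 0
      rw [aux_inrank_zero_iff G hG v]
      intro u harc
      have := hc.2 u v harc
      omega
    · intro u hu v hv
      simp only [Set.mem_setOf_eq] at hu hv
      constructor
      · intro h; exact hc.1 u v h (by omega)
      · intro h; have := hc.2 u v h; omega
  obtain ⟨I, hImax, hI0I⟩ := aux_extend G V0 _ hI0
  have hIV0 : I ⊆ V0 := hImax.1.1
  -- no arcs into members of I
  have hnoarc : ∀ u v, v ∈ I → ¬ G.Arc u v := by
    intro u v hv harc
    have hv0 : G.inrank v = 0 := hIV0 hv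
    exact (aux_inrank_zero_iff G hG v).mp hv0 u harc
  -- modified coloring
  set c' : V → ℕ := fun v => if v ∈ I then 0 else c v with hc'
  have h0 : ∀ v ∈ I, c' v = 0 := by
    intro v hv; simp only [hc', if_pos hv]
  have hne' : ∀ v, v ∉ I → c' v = c v := by
    intro v hv; simp only [hc', if_neg hv]
  have hc'pos : ∀ v, v ∉ I → 0 < c' v := by
    intro v hv
    rw [hne' v hv]
    by_contra h
    exact hv (hI0I (by simp only [Set.mem_setOf_eq]; omega))
  have hclass : {v | c' v = 0} = I := by
    ext v
    simp only [Set.mem_setOf_eq]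
    constructor
    · intro h
      by_contra hv
      have := hc'pos v hv
      omega
    · intro h; exact h0 v h
  have hc'proper : G.ProperColoring c' := by
    constructor
    · intro u v h
      by_cases hu : u ∈ I <;> by_cases hv : v ∈ I
      · exact absurd h (hImax.1.2 u hu v hv).1
      · have h1 := hc'pos v hv; have h2 := h0 u hu; omega
      · have h1 := hc'pos u hu; have h2 := h0 v hv; omega
      · rw [hne' u hu, hne' v hv]; exact hc.1 u v h
    · intro u v h
      have hv : v ∉ I := fun hv => hnoarc u v hv h
      by_cases hu : u ∈ I
      · have h1 := hc'pos v hv; have h2 := h0 u hu; omega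
      · rw [hne' u hu, hne' v hv]; exact hc.2 u v h
  have hc'lt : ∀ v, c' v < G.chi := by
    intro v
    by_cases hv : v ∈ I
    · rw [h0 v hv]; exact hchi_pos
    · rw [hne' v hv]; exact hclt v
  refine ⟨⟨c', hc'proper, hc'lt, hclass ▸ hImax⟩, ?_⟩
  -- Second part
  set Mset := {m | ∃ I : Set V,
      G.MaximalIndepIn {v | G.inrank v = 0} I ∧ m = (G.induce Iᶜ).chi} with hMset
  -- (a) chi(G - I) ≤ chi - 1
  have hstepA : (G.induce Iᶜ).chi ≤ G.chi - 1 := by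
    refine aux_chi_le _ (c := fun x => c' x.1 - 1) ⟨?_, ?_⟩ ?_
    · intro u v h
      dsimp only
      have hu := hc'pos u.1 u.2
      have hv := hc'pos v.1 v.2
      have := hc'proper.1 u.1 v.1 h
      omega
    · intro u v h
      dsimp only
      have hu := hc'pos u.1 u.2
      have := hc'proper.2 u.1 v.1 h
      omega
    · intro x
      have h1 := hc'lt x.1
      have h2 := hc'pos x.1 x.2
      omega
  have hmemA : (G.induce Iᶜ).chi ∈ Mset := ⟨I, hImax, rfl⟩
  have hMne : Mset.Nonempty := ⟨_, hmemA⟩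
  have hinfle : sInf Mset ≤ G.chi - 1 := le_trans (Nat.sInf_le hmemA) hstepA
  -- (b) for every m ∈ Mset, chi ≤ 1 + m
  have hstepB : ∀ m ∈ Mset, G.chi ≤ 1 + m := by
    rintro m ⟨I', hI', rfl⟩
    obtain ⟨d, hd, hdlt⟩ := aux_chi_mem_induce G hG I'ᶜ
    have hnoarc' : ∀ u v, v ∈ I' → ¬ G.Arc u v := by
      intro u v hv harc
      exact (aux_inrank_zero_iff G hG v).mp (hI'.1.1 hv) u harc
    refine aux_chi_le _
      (c := fun v => if h : v ∈ I' then 0 else d ⟨v, h⟩ + 1) ⟨?_, ?_⟩ ?_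
    · intro u v h
      by_cases hu : u ∈ I' <;> by_cases hv : v ∈ I'
      · exact absurd h (hI'.1.2 u hu v hv).1
      · simp only [dif_pos hu, dif_neg hv]; omega
      · simp only [dif_neg hu, dif_pos hv]; omega
      · simp only [dif_neg hu, dif_neg hv]
        have := hd.1 ⟨u, hu⟩ ⟨v, hv⟩ h
        omega
    · intro u v h
      have hv : v ∉ I' := fun hv => hnoarc' u v hv h
      by_cases hu : u ∈ I'
      · simp only [dif_pos hu, dif_neg hv]; omega
      · simp only [dif_neg hu, dif_neg hv]
        have := hd.2 ⟨u, hu⟩ ⟨v, hv⟩ h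
        omega
    · intro v
      by_cases hv : v ∈ I'
      · simp only [dif_pos hv]; omega
      · simp only [dif_neg hv]
        have := hdlt ⟨v, hv⟩
        omega
  have hfin := hstepB _ (Nat.sInf_mem hMne)
  omega
end
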